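/- Let n ∈ ℤ and let C be any q-deformed Cohn matrix with parameter n, i.e. C = A(n)_q, C = B(n)_q, or C = M·N for some finite word u over {0,1} with P_n(u) = (M, N). Writing C = (c_{ij}), one has Tr(C) = (q + 1 + q^{-1})·(q²·c_{12} + q·(1 − q)·c_{22}). -/

import Mathlib

open LaurentPolynomial

namespace QMarkovPaper

/-- Evaluation at `q = 1`: the ring homomorphism `ℤ[q^{±1}] → ℤ` sending `q = T 1` to `1`. -/
noncomputable def ev1 : LaurentPolynomial ℤ →+* ℤ :=
  AddMonoidAlgebra.liftNCRingHom (RingHom.id ℤ) 1 (fun _ _ => Commute.all _ _)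

/-- The `q`-Markov equation
`a² + b² + c² = q⁻¹(q² + q + 1)·a·b·c + (q − 1)(q⁻¹ − 1)` in `ℤ[q^{±1}]`. -/
def qMarkovEq (a b c : LaurentPolynomial ℤ) : Prop :=
  a ^ 2 + b ^ 2 + c ^ 2 =
    T (-1) * (T 2 + T 1 + 1) * (a * b * c) + (T 1 - 1) * (T (-1) - 1)

/-- A `q`-Markov triple: a solution of the `q`-Markov equation whose evaluations
at `q = 1` are positive integers. -/
def qMarkovTriple (a b c : LaurentPolynomial ℤ) : Prop :=
  qMarkovEq a b c ∧ 0 < ev1 a ∧ 0 < ev1 b ∧ 0 < ev1 c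

/-- The `q`-integer `[n]_q = (qⁿ − 1)/(q − 1) ∈ ℤ[q^{±1}]`, for `n : ℤ`. -/
noncomputable def qint : ℤ → LaurentPolynomial ℤ
  | Int.ofNat n => ∑ i ∈ Finset.range n, T (i : ℤ)
  | Int.negSucc n => -∑ i ∈ Finset.range (n + 1), T (-(i + 1) : ℤ)

/-- The `q`-deformed Cohn matrix `A(n)_q`. -/
noncomputable def Aq (n : ℤ) : Matrix (Fin 2) (Fin 2) (LaurentPolynomial ℤ) :=
  !![T (2 - n) * qint n, T (1 - n);
     qint n * qint (3 - n) - T (n - 1), T (-1) * qint (3 - n)]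

/-- The `q`-deformed Cohn matrix `B(n)_q = A(n)_q · A(n+1)_q`. -/
noncomputable def Bq (n : ℤ) : Matrix (Fin 2) (Fin 2) (LaurentPolynomial ℤ) :=
  Aq n * Aq (n + 1)

/-- The pair of `q`-deformed Cohn matrices attached to a vertex of the binary tree,
encoded as a word over `{0,1}` (here `false = 0`, `true = 1`):
`P n [] = (A(n)_q, B(n)_q)`; if `P n u = (M, N)` then `P n (u·0) = (M, M·N)` and
`P n (u·1) = (M·N, N)`. -/
noncomputable def P (n : ℤ) (u : List Bool) :
    Matrix (Fin 2) (Fin 2) (LaurentPolynomial ℤ) ×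
      Matrix (Fin 2) (Fin 2) (LaurentPolynomial ℤ) :=
  u.foldl (fun p b => if b then (p.1 * p.2, p.2) else (p.1, p.1 * p.2)) (Aq n, Bq n)




lemma qint_key (m : ℤ) : (T 1 - 1) * qint m = T m - 1 := by
  rcases m with n | n
  · induction n with
    | zero => simp [qint]
    | succ k ih =>
      have h1 : qint (Int.ofNat (k+1)) = qint (Int.ofNat k) + T (k : ℤ) := by
        simp [qint, Finset.sum_range_succ]
      have h2 : (T (Int.ofNat (k+1)) : LaurentPolynomial ℤ) = T (Int.ofNat k) * T 1 := by
        rw [← T_add]; norm_num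
      have h3 : (T (Int.ofNat k) : LaurentPolynomial ℤ) = T (k : ℤ) := by norm_num
      rw [h1, mul_add, ih, h2, h3]
      ring
  · induction n with
    | zero =>
      have h0 : qint (Int.negSucc 0) = -T (-1) := by simp [qint]
      rw [h0, show (Int.negSucc 0) = (-1 : ℤ) from rfl]
      have : (T 1 : LaurentPolynomial ℤ) * T (-1) = 1 := by rw [← T_add]; norm_num
      linear_combination -this
    | succ k ih =>
      have h1 : qint (Int.negSucc (k+1)) = qint (Int.negSucc k) - T (-((k:ℤ)+1+1)) := by
        simp only [qint, Finset.sum_range_succ]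
        push_cast
        ring
      have h3 : (T (-((k:ℤ)+1+1)) : LaurentPolynomial ℤ) = T (Int.negSucc (k+1)) := by
        congr 1
      have h2 : (T (Int.negSucc k) : LaurentPolynomial ℤ) = T 1 * T (Int.negSucc (k+1)) := by
        rw [← T_add]
        congr 1
      rw [h1, mul_sub, ih, h2, h3]
      ring



lemma T1_sub_one_ne : (T 1 - 1 : LaurentPolynomial ℤ) ≠ 0 := by
  have h0 : (Polynomial.X - 1 : Polynomial ℤ) ≠ 0 := by
    intro h
    have := congrArg (Polynomial.eval 2) h
    simp at this
  have h1 : (Polynomial.X - 1 : Polynomial ℤ).toLaurent = T 1 - 1 := by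
    simp [Polynomial.toLaurent_X]
  rw [← h1, Polynomial.toLaurent_ne_zero]
  exact h0

/-- The trace identity satisfied by all `q`-deformed Cohn matrices. -/
abbrev keyC (C : Matrix (Fin 2) (Fin 2) (LaurentPolynomial ℤ)) : Prop :=
  Matrix.trace C = (T 1 + 1 + T (-1)) * (T 2 * C 0 1 + T 1 * (1 - T 1) * C 1 1)

lemma keyC_comb (r t : LaurentPolynomial ℤ) {C D : Matrix (Fin 2) (Fin 2) (LaurentPolynomial ℤ)} (hC : keyC C) (hD : keyC D) :
    keyC (r • C - t • D) := by
  unfold keyC at *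
  simp only [Matrix.trace_sub, Matrix.trace_smul, Matrix.sub_apply, Matrix.smul_apply,
    smul_eq_mul]
  linear_combination r * hC - t * hD

lemma CH_left (M N : Matrix (Fin 2) (Fin 2) (LaurentPolynomial ℤ)) :
    M * (M * N) = Matrix.trace M • (M * N) - M.det • N := by
  ext i j : 1
  fin_cases i <;> fin_cases j <;>
    simp [Matrix.mul_apply, Fin.sum_univ_two, Matrix.trace_fin_two, Matrix.det_fin_two,
      Matrix.sub_apply, Matrix.smul_apply, smul_eq_mul] <;> ring

lemma CH_right (M N : Matrix (Fin 2) (Fin 2) (LaurentPolynomial ℤ)) :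
    (M * N) * N = Matrix.trace N • (M * N) - N.det • M := by
  ext i j : 1
  fin_cases i <;> fin_cases j <;>
    simp [Matrix.mul_apply, Fin.sum_univ_two, Matrix.trace_fin_two, Matrix.det_fin_two,
      Matrix.sub_apply, Matrix.smul_apply, smul_eq_mul] <;> ring

lemma keyA (m : ℤ) : keyC (Aq m) := by
  have hab : (T 1 : LaurentPolynomial ℤ) * T (-1) = 1 := by rw [← T_add]; norm_num
  have hcd : (T m : LaurentPolynomial ℤ) * T (-m) = 1 := by rw [← T_add]; simp
  have h1 := qint_key m
  have h2 : (T 1 - 1) * qint (m+1) = T m * (T 1 : LaurentPolynomial ℤ) - 1 := by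
    rw [qint_key, T_add]
  have h3 : (T 1 - 1) * qint (2-m) = (T 1 : LaurentPolynomial ℤ) * (T 1 * T (-m)) - 1 := by
    rw [qint_key, show (2-m : ℤ) = 1 + (1 + -m) by ring, T_add, T_add]
  have h4 : (T 1 - 1) * qint (3-m) =
      (T 1 : LaurentPolynomial ℤ) * (T 1 * (T 1 * T (-m))) - 1 := by
    rw [qint_key, show (3-m : ℤ) = 1 + (1 + (1 + -m)) by ring, T_add, T_add, T_add]
  have eT2m : (T (2-m) : LaurentPolynomial ℤ) = T 1 * (T 1 * T (-m)) := by
    rw [show (2-m : ℤ) = 1 + (1 + -m) by ring, T_add, T_add]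
  have eT1m : (T (1-m) : LaurentPolynomial ℤ) = T 1 * T (-m) := by
    rw [show (1-m : ℤ) = 1 + -m by ring, T_add]
  have eTm1 : (T (m-1) : LaurentPolynomial ℤ) = T m * T (-1) := T_sub m 1
  have eT2 : (T 2 : LaurentPolynomial ℤ) = T 1 * T 1 := by
    rw [show (2 : ℤ) = 1 + 1 by norm_num, T_add]

  unfold keyC Aq
  rw [Matrix.trace_fin_two]
  simp only [Matrix.cons_val', Matrix.cons_val_zero, Matrix.cons_val_one, Matrix.head_cons,
    Matrix.head_fin_const, Matrix.empty_val', Matrix.cons_val_fin_one, Matrix.of_apply]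
  rw [eT2m, eT1m, eT2]
  apply mul_left_cancel₀ T1_sub_one_ne
  linear_combination (T (-1) + (-1:LaurentPolynomial ℤ)*(T 1:LaurentPolynomial ℤ)*T (-1) + (-1:LaurentPolynomial ℤ)*(T 1:LaurentPolynomial ℤ)^2 + (T 1:LaurentPolynomial ℤ)^2*T (-m) + (-1:LaurentPolynomial ℤ)*(T 1:LaurentPolynomial ℤ)^3*T (-m) + (-1:LaurentPolynomial ℤ)*(T 1:LaurentPolynomial ℤ)^3*T (-1)*T (-m) + (T 1:LaurentPolynomial ℤ)^4*T (-1)*T (-m) + (T 1:LaurentPolynomial ℤ)^5*T (-m))*hab + ((T 1:LaurentPolynomial ℤ)^2)*hcd + ((T 1:LaurentPolynomial ℤ)^2*T (-m))*h1 + (T (-1) + (-1:LaurentPolynomial ℤ)*(T 1:LaurentPolynomial ℤ)*T (-1) + (-1:LaurentPolynomial ℤ)*(T 1:LaurentPolynomial ℤ)*T (-1)^2 + (T 1:LaurentPolynomial ℤ)^2*T (-1)^2 + (T 1:LaurentPolynomial ℤ)^3*T (-1))*h4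

lemma keyB (m : ℤ) : keyC (Bq m) := by
  have hab : (T 1 : LaurentPolynomial ℤ) * T (-1) = 1 := by rw [← T_add]; norm_num
  have hcd : (T m : LaurentPolynomial ℤ) * T (-m) = 1 := by rw [← T_add]; simp
  have h1 := qint_key m
  have h2 : (T 1 - 1) * qint (m+1) = T m * (T 1 : LaurentPolynomial ℤ) - 1 := by
    rw [qint_key, T_add]
  have h3 : (T 1 - 1) * qint (2-m) = (T 1 : LaurentPolynomial ℤ) * (T 1 * T (-m)) - 1 := by
    rw [qint_key, show (2-m : ℤ) = 1 + (1 + -m) by ring, T_add, T_add]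
  have h4 : (T 1 - 1) * qint (3-m) =
      (T 1 : LaurentPolynomial ℤ) * (T 1 * (T 1 * T (-m))) - 1 := by
    rw [qint_key, show (3-m : ℤ) = 1 + (1 + (1 + -m)) by ring, T_add, T_add, T_add]
  have eT2m : (T (2-m) : LaurentPolynomial ℤ) = T 1 * (T 1 * T (-m)) := by
    rw [show (2-m : ℤ) = 1 + (1 + -m) by ring, T_add, T_add]
  have eT1m : (T (1-m) : LaurentPolynomial ℤ) = T 1 * T (-m) := by
    rw [show (1-m : ℤ) = 1 + -m by ring, T_add]
  have eTm1 : (T (m-1) : LaurentPolynomial ℤ) = T m * T (-1) := T_sub m 1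
  have eT2 : (T 2 : LaurentPolynomial ℤ) = T 1 * T 1 := by
    rw [show (2 : ℤ) = 1 + 1 by norm_num, T_add]

  have hA1 : Aq (m+1) = !![T 1 * T (-m) * qint (m+1), T (-m);
      qint (m+1) * qint (2-m) - T m, T (-1) * qint (2-m)] := by
    unfold Aq
    rw [show (2-(m+1):ℤ) = 1 + -m by ring, show (1-(m+1):ℤ) = -m by ring,
      show ((m+1)-1:ℤ) = m by ring, show (3-(m+1):ℤ) = 2-m by ring, T_add]
  unfold keyC Bq
  rw [hA1, Matrix.trace_fin_two]
  unfold Aq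
  simp only [Matrix.mul_apply, Fin.sum_univ_two, Matrix.cons_val', Matrix.cons_val_zero,
    Matrix.cons_val_one, Matrix.head_cons, Matrix.head_fin_const, Matrix.empty_val',
    Matrix.cons_val_fin_one, Matrix.of_apply]
  rw [eT2m, eT1m, eTm1, eT2]
  apply mul_left_cancel₀ (mul_ne_zero T1_sub_one_ne T1_sub_one_ne)
  linear_combination ((-1:LaurentPolynomial ℤ)*T (-m) + T m*T (-m) + T (-1)*T m*T (-m) + (-1:LaurentPolynomial ℤ)*T (-1)^2 + (T 1:LaurentPolynomial ℤ) + (-1:LaurentPolynomial ℤ)*(T 1:LaurentPolynomial ℤ)*T m*T (-m) + (-3:LaurentPolynomial ℤ)*(T 1:LaurentPolynomial ℤ)*T (-1)*T m*T (-m) + (T 1:LaurentPolynomial ℤ)*T (-1)^2 + (-1:LaurentPolynomial ℤ)*(T 1:LaurentPolynomial ℤ)^2*T m*T (-m) + (T 1:LaurentPolynomial ℤ)^2*T (-1) + (-1:LaurentPolynomial ℤ)*(T 1:LaurentPolynomial ℤ)^2*T (-1)*T (-m) + (3:LaurentPolynomial ℤ)*(T 1:LaurentPolynomial ℤ)^2*T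 (-1)*T m*T (-m) + (T 1:LaurentPolynomial ℤ)^2*T (-1)^2*T (-m) + (-1:LaurentPolynomial ℤ)*(T 1:LaurentPolynomial ℤ)^3*T (-m) + (T 1:LaurentPolynomial ℤ)^3*T (-m)^2 + (2:LaurentPolynomial ℤ)*(T 1:LaurentPolynomial ℤ)^3*T m*T (-m) + (T 1:LaurentPolynomial ℤ)^3*T (-1)*T (-m) + (-1:LaurentPolynomial ℤ)*(T 1:LaurentPolynomial ℤ)^3*T (-1)*T m*T (-m) + (-1:LaurentPolynomial ℤ)*(T 1:LaurentPolynomial ℤ)^4*T m*T (-m) + (-1:LaurentPolynomial ℤ)*(T 1:LaurentPolynomial ℤ)^4*T (-1)*T (-m) + (T 1:LaurentPolynomial ℤ)^4*T (-1)*T (-m)^2 + (-1:LaurentPolynomial ℤ)*(T 1:LaurentPolynomial ℤ)^4*T (-1)^2*T (-m) + (-1:LaurentPolynomial ℤ)*(T 1:LaurentPolynomial ℤ)^5*T (-1)*T (-m) + (-1:LaurentPolynomial ℤ)*(T 1:LaurentPolynomial ℤ)^5*T (-1)*T (-m)^2 + (-1:LaurentPolynomial ℤ)*(T 1:LaurentPolynomial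 ℤ)^5*T (-1)^2*T (-m)^2 + (T 1:LaurentPolynomial ℤ)^6*T (-1)^2*T (-m)^2 + (T 1:LaurentPolynomial ℤ)^7*T (-1)*T (-m)^2)*hab + ((-1:LaurentPolynomial ℤ)*(T 1:LaurentPolynomial ℤ) + (T 1:LaurentPolynomial ℤ)^4*T m*T (-m))*hcd + ((-1:LaurentPolynomial ℤ)*T (-m) + (T 1:LaurentPolynomial ℤ)*T (-m) + (T 1:LaurentPolynomial ℤ)*T (-1)*T (-m) + (-1:LaurentPolynomial ℤ)*(T 1:LaurentPolynomial ℤ)^2*T (-1)*T (-m) + (-1:LaurentPolynomial ℤ)*(T 1:LaurentPolynomial ℤ)^3*T (-m) + (T 1:LaurentPolynomial ℤ)^4*T m*T (-m)^2)*h1 + ((-1:LaurentPolynomial ℤ)*(T 1:LaurentPolynomial ℤ)*T (-m) + (T 1:LaurentPolynomial ℤ)^3*T (-m)^2 + (-1:LaurentPolynomial ℤ)*(T 1:LaurentPolynomial ℤ)^3*T (-m)^2*qint m + (T 1:LaurentPolynomial ℤ)^4*T (-m)^2*qint m)*h2 + ((-1:LaurentPolynomial ℤ)*T (-1)^2 +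 (-1:LaurentPolynomial ℤ)*(T 1:LaurentPolynomial ℤ)*T (-m)*qint (m+1) + (T 1:LaurentPolynomial ℤ)*T (-1)^2 + (T 1:LaurentPolynomial ℤ)*T (-1)^3 + (T 1:LaurentPolynomial ℤ)^2*T (-m)*qint (m+1) + (-1:LaurentPolynomial ℤ)*(T 1:LaurentPolynomial ℤ)^2*T (-1)^3 + (T 1:LaurentPolynomial ℤ)^3*T (-1)*T (-m) + (-1:LaurentPolynomial ℤ)*(T 1:LaurentPolynomial ℤ)^3*T (-1)^2 + (2:LaurentPolynomial ℤ)*(T 1:LaurentPolynomial ℤ)^3*T (-1)^2*T (-m) + (-2:LaurentPolynomial ℤ)*(T 1:LaurentPolynomial ℤ)^4*T (-1)^2*T (-m) + (-1:LaurentPolynomial ℤ)*(T 1:LaurentPolynomial ℤ)^4*T (-1)^3*T (-m) + (-1:LaurentPolynomial ℤ)*(T 1:LaurentPolynomial ℤ)^5*T (-1)*T (-m) + (T 1:LaurentPolynomial ℤ)^5*T (-1)^3*T (-m) + (T 1:LaurentPolynomial ℤ)^6*T (-1)^2*T (-m))*h3 + ((-1:LaurentPolynomial ℤ)*T (-m)*qint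 m + (-1:LaurentPolynomial ℤ)*T (-1)^2*qint (2-m) + (2:LaurentPolynomial ℤ)*(T 1:LaurentPolynomial ℤ)*T (-m)*qint m + (T 1:LaurentPolynomial ℤ)*T (-1)*T (-m)*qint m + (2:LaurentPolynomial ℤ)*(T 1:LaurentPolynomial ℤ)*T (-1)^2*qint (2-m) + (T 1:LaurentPolynomial ℤ)*T (-1)^3*qint (2-m) + (-1:LaurentPolynomial ℤ)*(T 1:LaurentPolynomial ℤ)^2*T (-m)*qint m + (-2:LaurentPolynomial ℤ)*(T 1:LaurentPolynomial ℤ)^2*T (-1)*T (-m)*qint m + (-1:LaurentPolynomial ℤ)*(T 1:LaurentPolynomial ℤ)^2*T (-1)^2*qint (2-m) + (-2:LaurentPolynomial ℤ)*(T 1:LaurentPolynomial ℤ)^2*T (-1)^3*qint (2-m) + (-1:LaurentPolynomial ℤ)*(T 1:LaurentPolynomial ℤ)^3*T (-m)*qint m + (T 1:LaurentPolynomial ℤ)^3*T (-1)*T (-m)*qint m + (-1:LaurentPolynomial ℤ)*(T 1:LaurentPolynomial ℤ)^3*T (-1)^2*qint (2-m) + (T 1:LaurentPolynomial ℤ)^3*T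 (-1)^3*qint (2-m) + (T 1:LaurentPolynomial ℤ)^4*T (-m)*qint m + (T 1:LaurentPolynomial ℤ)^4*T (-1)^2*qint (2-m))*h4

lemma good_fold (u : List Bool) :
    ∀ p : Matrix (Fin 2) (Fin 2) (LaurentPolynomial ℤ) × Matrix (Fin 2) (Fin 2) (LaurentPolynomial ℤ),
      keyC p.1 ∧ keyC p.2 ∧ keyC (p.1 * p.2) →
      keyC ((u.foldl (fun p b => if b then (p.1 * p.2, p.2) else (p.1, p.1 * p.2)) p).1) ∧
      keyC ((u.foldl (fun p b => if b then (p.1 * p.2, p.2) else (p.1, p.1 * p.2)) p).2) ∧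
      keyC ((u.foldl (fun p b => if b then (p.1 * p.2, p.2) else (p.1, p.1 * p.2)) p).1 *
        (u.foldl (fun p b => if b then (p.1 * p.2, p.2) else (p.1, p.1 * p.2)) p).2) := by
  induction u with
  | nil => intro p h; exact h
  | cons b u ih =>
    intro p h
    obtain ⟨h1, h2, h3⟩ := h
    apply ih
    cases b
    · refine ⟨h1, h3, ?_⟩
      show keyC (p.1 * (p.1 * p.2))
      rw [CH_left]
      exact keyC_comb _ _ h3 h2
    · refine ⟨h3, h2, ?_⟩
      show keyC ((p.1 * p.2) * p.2)
      rw [CH_right]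
      exact keyC_comb _ _ h3 h1

/-- For any `q`-deformed Cohn matrix `C` with parameter `n`,
`Tr C = (q + 1 + q⁻¹)·(q²·c₁₂ + q·(1 − q)·c₂₂)`. -/
theorem trace_Cohn_second_column (n : ℤ)
    (Cm : Matrix (Fin 2) (Fin 2) (LaurentPolynomial ℤ))
    (hC : Cm = Aq n ∨ Cm = Bq n ∨ ∃ u : List Bool, Cm = (P n u).1 * (P n u).2) :
    Matrix.trace Cm =
      (T 1 + 1 + T (-1)) * (T 2 * Cm 0 1 + T 1 * (1 - T 1) * Cm 1 1) := by
  rcases hC with h | h | ⟨u, h⟩ <;> subst h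
  · exact keyA n
  · exact keyB n
  · have base : keyC (Aq n, Bq n).1 ∧ keyC (Aq n, Bq n).2 ∧
        keyC ((Aq n, Bq n).1 * (Aq n, Bq n).2) := by
      refine ⟨keyA n, keyB n, ?_⟩
      show keyC (Aq n * Bq n)
      rw [Bq, CH_left]
      exact keyC_comb _ _ (keyB n) (keyA (n+1))
    exact (good_fold u (Aq n, Bq n) base).2.2

end QMarkovPaper
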